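/- For the family φ_t of generalized Choi maps (with a(t) = (1−t)²/(1−t+t²), b(t) = t²/(1−t+t²), c(t) = 1/(1−t+t²)) and t > 0, one has φ_t = U(3π/2) ∘ φ_{1/t} ∘ U(π/2), where U(θ) denotes conjugation by the rotation matrix [[cos θ, 0, sin θ],[0,1,0],[−sin θ, 0, cos θ]]. -/

import Mathlib

open Matrix

noncomputable def aCoeff (t : ℝ) : ℝ := (1 - t) ^ 2 / (1 - t + t ^ 2)
noncomputable def bCoeff (t : ℝ) : ℝ := t ^ 2 / (1 - t + t ^ 2)
noncomputable def cCoeff (t : ℝ) : ℝ := 1 / (1 - t + t ^ 2)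

/-- The generalized Choi map with coefficients `a b c` on `M₃(ℂ)`. -/
noncomputable def gchoi (a b c : ℝ) (x : Matrix (Fin 3) (Fin 3) ℂ) :
    Matrix (Fin 3) (Fin 3) ℂ :=
  (1 / 2 : ℂ) •
    !![(a : ℂ) * x 0 0 + (b : ℂ) * x 1 1 + (c : ℂ) * x 2 2, -x 0 1, -x 0 2;
       -x 1 0, (a : ℂ) * x 1 1 + (b : ℂ) * x 2 2 + (c : ℂ) * x 0 0, -x 1 2;
       -x 2 0, -x 2 1, (a : ℂ) * x 2 2 + (b : ℂ) * x 0 0 + (c : ℂ) * x 1 1]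

/-- The generalized Choi map `φ_t`. -/
noncomputable def gchoiT (t : ℝ) : Matrix (Fin 3) (Fin 3) ℂ → Matrix (Fin 3) (Fin 3) ℂ :=
  gchoi (aCoeff t) (bCoeff t) (cCoeff t)

/-- The rotation matrix `U(θ)`. -/
noncomputable def rotU (θ : ℝ) : Matrix (Fin 3) (Fin 3) ℂ :=
  !![(Real.cos θ : ℂ), 0, (Real.sin θ : ℂ);
     0, 1, 0;
     (-Real.sin θ : ℂ), 0, (Real.cos θ : ℂ)]

/-! Since `1 - t⁻¹ + t⁻² = (1 - t + t²) / t²`, replacing `t` by `1/t` fixes `a` and exchanges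
`b` and `c`. Conjugation by `U = U(π/2)`, a signed permutation matrix exchanging the first and
third basis vectors, reverses the order of the diagonal entries and so exchanges `b` and `c` back;
finally `U(3π/2) = Uᴴ = U⁻¹`. -/

lemma one_sub_add_sq_pos (t : ℝ) : 0 < 1 - t + t ^ 2 := by
  nlinarith [sq_nonneg (t - 1), sq_nonneg t]

section Coefficients

variable {t : ℝ}

lemma one_sub_inv_add_inv_sq (ht : t ≠ 0) :
    1 - t⁻¹ + t⁻¹ ^ 2 = (1 - t + t ^ 2) / t ^ 2 := by
  field_simp
  ring

lemma aCoeff_inv (ht : t ≠ 0) : aCoeff t⁻¹ = aCoeff t := by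
  have := (one_sub_add_sq_pos t).ne'
  rw [aCoeff, aCoeff, one_sub_inv_add_inv_sq ht]
  field_simp
  ring

lemma bCoeff_inv (ht : t ≠ 0) : bCoeff t⁻¹ = cCoeff t := by
  have := (one_sub_add_sq_pos t).ne'
  rw [bCoeff, cCoeff, one_sub_inv_add_inv_sq ht]
  field_simp

lemma cCoeff_inv (ht : t ≠ 0) : cCoeff t⁻¹ = bCoeff t := by
  have := (one_sub_add_sq_pos t).ne'
  rw [cCoeff, bCoeff, one_sub_inv_add_inv_sq ht]
  field_simp

lemma gchoiT_inv (ht : t ≠ 0) : gchoiT t⁻¹ = gchoi (aCoeff t) (cCoeff t) (bCoeff t) := by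
  rw [gchoiT, aCoeff_inv ht, bCoeff_inv ht, cCoeff_inv ht]

end Coefficients

section Rotation

lemma rotU_zero : rotU 0 = 1 := by
  ext i j
  fin_cases i <;> fin_cases j <;> simp [rotU]

lemma rotU_add (θ φ : ℝ) : rotU (θ + φ) = rotU θ * rotU φ := by
  ext i j
  fin_cases i <;> fin_cases j <;>
    simp [rotU, mul_apply, Fin.sum_univ_three, Real.cos_add, Real.sin_add] <;> ring

lemma rotU_periodic : Function.Periodic rotU (2 * Real.pi) := by
  intro θ
  simp [rotU, Real.cos_add_two_pi, Real.sin_add_two_pi]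

lemma conjTranspose_rotU (θ : ℝ) : (rotU θ)ᴴ = rotU (-θ) := by
  ext i j
  fin_cases i <;> fin_cases j <;>
    simp [rotU, conjTranspose_apply, -Complex.ofReal_cos, -Complex.ofReal_sin]

lemma conjTranspose_rotU_mul_self (θ : ℝ) : (rotU θ)ᴴ * rotU θ = 1 := by
  rw [conjTranspose_rotU, ← rotU_add, neg_add_cancel, rotU_zero]

lemma rotU_three_pi_div_two : rotU (3 * Real.pi / 2) = (rotU (Real.pi / 2))ᴴ := by
  rw [conjTranspose_rotU, ← rotU_periodic (-(Real.pi / 2))]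
  ring_nf

lemma rotU_pi_div_two : rotU (Real.pi / 2) = !![0, 0, 1; 0, 1, 0; -1, 0, 0] := by
  simp [rotU]

end Rotation

lemma gchoi_conj_rotU_pi_div_two (a b c : ℝ) (X : Matrix (Fin 3) (Fin 3) ℂ) :
    gchoi a b c (rotU (Real.pi / 2) * X * (rotU (Real.pi / 2))ᴴ) =
      rotU (Real.pi / 2) * gchoi a c b X * (rotU (Real.pi / 2))ᴴ := by
  rw [rotU_pi_div_two]
  ext i j
  fin_cases i <;> fin_cases j <;>
    simp [gchoi, mul_apply, vecMul, dotProduct, Fin.sum_univ_three, conjTranspose_apply] <;> ring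

/-- `φ_t = U(3π/2) ∘ φ_{1/t} ∘ U(π/2)` for `t > 0`. -/
theorem gchoiT_unitary_relation (t : ℝ) (ht : 0 < t) :
    ∀ X : Matrix (Fin 3) (Fin 3) ℂ,
      gchoiT t X =
        rotU (3 * Real.pi / 2) *
          gchoiT (1 / t) (rotU (Real.pi / 2) * X * (rotU (Real.pi / 2))ᴴ) *
            (rotU (3 * Real.pi / 2))ᴴ := by
  intro X
  set U := rotU (Real.pi / 2)
  have hU : Uᴴ * U = 1 := conjTranspose_rotU_mul_self _
  rw [one_div, gchoiT_inv ht.ne', gchoi_conj_rotU_pi_div_two, rotU_three_pi_div_two,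
    conjTranspose_conjTranspose]
  calc gchoiT t X = (Uᴴ * U) * gchoiT t X * (Uᴴ * U) := by
        rw [hU, Matrix.one_mul, Matrix.mul_one]
    _ = Uᴴ * (U * gchoiT t X * Uᴴ) * U := by simp only [Matrix.mul_assoc]
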